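/- Let (S,T) be an isometric representation of F_θ^+ on H (m ≥ 2 or n ≥ 2) and let 𝔖 be the unital WOT-closed algebra generated by {S_1,…,S_m,T_1,…,T_n}. If the unital WOT-closed algebra generated by {S_1,…,S_m} is self-adjoint and the unital WOT-closed algebra generated by {T_1,…,T_n} is self-adjoint (i.e. both row-isometries S and T are singular), then 𝔖 is self-adjoint. -/

import Mathlib

noncomputable section

open scoped InnerProductSpace ComplexInnerProductSpace Classical

section GeneralDefs

variable {E : Type*} [NormedAddCommGroup E] [InnerProductSpace ℂ E]

/-- The operator associated to a word: `wordOp V [a₁, …, a_r] = V a₁ * ⋯ * V a_r`. -/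
def wordOp {ι : Type*} (V : ι → E →L[ℂ] E) (w : List ι) : E →L[ℂ] E :=
  (w.map V).prod

/-- The operator associated to a word of fixed length `k` given as a function `Fin k → ι`. -/
def fnWordOp {ι : Type*} {k : ℕ} (V : ι → E →L[ℂ] E) (u : Fin k → ι) : E →L[ℂ] E :=
  wordOp V (List.ofFn u)

/-- The closure of a set of operators in the weak operator topology, described via
basic WOT-neighbourhoods (finitely many vector functionals). -/
def wotClosure (S : Set (E →L[ℂ] E)) : Set (E →L[ℂ] E) :=
  {A | ∀ ε > (0 : ℝ), ∀ F : Finset (E × E), ∃ B ∈ S, ∀ p ∈ F, ‖⟪p.1, (A - B) p.2⟫‖ < ε}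

/-- The unital WOT-closed algebra generated by a set of operators. -/
def genWotAlg (G : Set (E →L[ℂ] E)) : Set (E →L[ℂ] E) :=
  wotClosure ((Algebra.adjoin ℂ G : Subalgebra ℂ (E →L[ℂ] E)) : Set (E →L[ℂ] E))

/-- A wandering vector for a row-isometry `V = [V_a : a ∈ ι]`: a unit vector whose orbit
under all words in the `V_a` is an orthonormal family. -/
def IsWandering {ι : Type*} (V : ι → E →L[ℂ] E) (ζ : E) : Prop :=
  ‖ζ‖ = 1 ∧ ∀ w w' : List ι,
    ⟪wordOp V w ζ, wordOp V w' ζ⟫ = if w = w' then 1 else 0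

/-- Restriction of an operator to an invariant subspace (junk value `0` if not invariant). -/
def restrictCLM (A : E →L[ℂ] E) (M : Submodule ℂ E) : M →L[ℂ] M :=
  if h : ∀ x ∈ M, A x ∈ M then
    { toFun := fun x => ⟨A x, h x x.2⟩
      map_add' := by intro x y; ext; simp
      map_smul' := by intro c x; ext; simp
      cont := Continuous.subtype_mk (A.continuous.comp continuous_subtype_val) _ }
  else 0

/-- The unital WOT-closed algebra on `M` generated by the restrictions of the `V a` to `M`. -/
def rowAlgOn {ι : Type*} (V : ι → E →L[ℂ] E) (M : Submodule ℂ E) : Set (M →L[ℂ] M) :=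
  genWotAlg (Set.range fun a => restrictCLM (V a) M)

/-- The unital WOT-closed algebra on `M` generated by the restrictions of the `V a`
is self-adjoint. -/
def restrictedAlgSelfAdjoint {ι : Type*} (V : ι → E →L[ℂ] E) (M : Submodule ℂ E) : Prop :=
  ∀ A ∈ rowAlgOn V M, ∃ B ∈ rowAlgOn V M,
    ∀ x y : M, ⟪((A x : M) : E), (y : E)⟫ = ⟪(x : E), ((B y : M) : E)⟫

variable [CompleteSpace E]

/-- A row-isometry is of dilation type if it is defect free and has no nonzero reducing
subspace on which it is either absolutely continuous (spanned by wandering vectors) or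
singular (generating a self-adjoint WOT-closed algebra). -/
def IsDilationType {ι : Type*} [Fintype ι] (V : ι → E →L[ℂ] E) : Prop :=
  (∑ a, V a * star (V a)) = 1 ∧
    ¬ ∃ M : Submodule ℂ E, M ≠ ⊥ ∧ IsClosed (M : Set E) ∧
      (∀ a, ∀ x ∈ M, V a x ∈ M) ∧ (∀ a, ∀ x ∈ M, star (V a) x ∈ M) ∧
      ((M = (Submodule.span ℂ {ζ : E | ζ ∈ M ∧ IsWandering V ζ}).topologicalClosure) ∨
        restrictedAlgSelfAdjoint V M)

end GeneralDefs

/-- An isometric representation of the single-vertex 2-graph `F_θ⁺` on a Hilbert space `H`. -/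
structure TwoGraphRep (m n : ℕ) (θ : Equiv.Perm (Fin m × Fin n)) (H : Type*)
    [NormedAddCommGroup H] [InnerProductSpace ℂ H] [CompleteSpace H] where
  S : Fin m → H →L[ℂ] H
  T : Fin n → H →L[ℂ] H
  isometS : ∀ i i', star (S i) * S i' = if i = i' then 1 else 0
  isometT : ∀ j j', star (T j) * T j' = if j = j' then 1 else 0
  comm : ∀ i j, S i * T j = T (θ (i, j)).2 * S (θ (i, j)).1

namespace TwoGraphRep

variable {m n : ℕ} {θ : Equiv.Perm (Fin m × Fin n)} {H : Type*}
  [NormedAddCommGroup H] [InnerProductSpace ℂ H] [CompleteSpace H]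

/-- A representation is of Cuntz type if both row-isometries are defect free. -/
def CuntzType (ρ : TwoGraphRep m n θ H) : Prop :=
  (∑ i, ρ.S i * star (ρ.S i)) = 1 ∧ (∑ j, ρ.T j * star (ρ.T j)) = 1

/-- The nonself-adjoint 2-graph algebra `𝔖`: the unital WOT-closed algebra generated by
the `S_i` and `T_j`. -/
def alg (ρ : TwoGraphRep m n θ H) : Set (H →L[ℂ] H) :=
  genWotAlg (Set.range ρ.S ∪ Set.range ρ.T)

/-- The von Neumann algebra generated by the `S_i` and `T_j`: the WOT-closure of the
unital *-algebra they generate. -/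
def vnAlg (ρ : TwoGraphRep m n θ H) : Set (H →L[ℂ] H) :=
  genWotAlg ((Set.range ρ.S ∪ Set.range ρ.T) ∪ star '' (Set.range ρ.S ∪ Set.range ρ.T))

/-- Wandering vector for the row-isometry `[S_u T_v : |u| = k, |v| = l]`. -/
def IsWanderingKL (ρ : TwoGraphRep m n θ H) (k l : ℕ) (ζ : H) : Prop :=
  ‖ζ‖ = 1 ∧ ∀ (p p' : ℕ) (u u' : List (Fin m)) (v v' : List (Fin n)),
    u.length = p * k → v.length = p * l → u'.length = p' * k → v'.length = p' * l →
    ⟪(wordOp ρ.S u * wordOp ρ.T v) ζ, (wordOp ρ.S u' * wordOp ρ.T v') ζ⟫ =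
      if u = u' ∧ v = v' then 1 else 0

/-- The range of the structure projection `P_{k,l}`: the orthogonal complement of the
closed linear span of the wandering vectors of `[S_u T_v : |u| = k, |v| = l]`. -/
def structSpaceKL (ρ : TwoGraphRep m n θ H) (k l : ℕ) : Submodule ℂ H :=
  ((Submodule.span ℂ {ζ : H | ρ.IsWanderingKL k l ζ}).topologicalClosure)ᗮ

/-- The range of the first structure projection `P = ⋀_{k,l>0} P_{k,l}`. -/
def firstStructSpace (ρ : TwoGraphRep m n θ H) : Submodule ℂ H :=
  ⨅ (k : ℕ) (l : ℕ) (_ : 0 < k) (_ : 0 < l), ρ.structSpaceKL k l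

/-- The row-isometry `[S_u T_v : |u| = k, |v| = l]`. -/
def rowKL (ρ : TwoGraphRep m n θ H) (k l : ℕ) :
    ((Fin k → Fin m) × (Fin l → Fin n)) → H →L[ℂ] H :=
  fun p => fnWordOp ρ.S p.1 * fnWordOp ρ.T p.2

/-- A wandering vector for the representation `(S,T)`. -/
def IsWanderingRep (ρ : TwoGraphRep m n θ H) (ζ : H) : Prop :=
  ‖ζ‖ = 1 ∧ ∀ (u u' : List (Fin m)) (v v' : List (Fin n)),
    ⟪(wordOp ρ.S u * wordOp ρ.T v) ζ, (wordOp ρ.S u' * wordOp ρ.T v') ζ⟫ =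
      if u = u' ∧ v = v' then 1 else 0

/-- The representation is irreducible: the only closed subspaces invariant under all
`S_i, T_j, S_i*, T_j*` are `⊥` and `⊤`. -/
def Irreducible (ρ : TwoGraphRep m n θ H) : Prop :=
  ∀ M : Submodule ℂ H, IsClosed (M : Set H) →
    (∀ i, ∀ x ∈ M, ρ.S i x ∈ M) → (∀ i, ∀ x ∈ M, star (ρ.S i) x ∈ M) →
    (∀ j, ∀ x ∈ M, ρ.T j x ∈ M) → (∀ j, ∀ x ∈ M, star (ρ.T j) x ∈ M) →
    M = ⊥ ∨ M = ⊤

/-- The representation is atomic with standard basis `ξ`: every generator maps each basis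
vector to a unimodular multiple of a basis vector. -/
def AtomicBasis {Λ : Type*} (ρ : TwoGraphRep m n θ H) (ξ : HilbertBasis Λ ℂ H) : Prop :=
  (∀ i t, ∃ (c : ℂ) (t' : Λ), ‖c‖ = 1 ∧ ρ.S i (ξ t) = c • ξ t') ∧
  (∀ j t, ∃ (c : ℂ) (t' : Λ), ‖c‖ = 1 ∧ ρ.T j (ξ t) = c • ξ t')

/-- `x` has a blue ring: `S_u x ∈ 𝕋x` for some nonempty word `u`. -/
def HasBlueRing (ρ : TwoGraphRep m n θ H) (x : H) : Prop :=
  ∃ u : List (Fin m), u ≠ [] ∧ ∃ c : ℂ, ‖c‖ = 1 ∧ wordOp ρ.S u x = c • x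

/-- `x` has a red ring: `T_v x ∈ 𝕋x` for some nonempty word `v`. -/
def HasRedRing (ρ : TwoGraphRep m n θ H) (x : H) : Prop :=
  ∃ v : List (Fin n), v ≠ [] ∧ ∃ c : ℂ, ‖c‖ = 1 ∧ wordOp ρ.T v x = c • x

/-- `x` has a mixed ring: `T_v S_u x ∈ 𝕋x` for some nonempty words `u`, `v`. -/
def HasMixedRing (ρ : TwoGraphRep m n θ H) (x : H) : Prop :=
  ∃ (u : List (Fin m)) (v : List (Fin n)), u ≠ [] ∧ v ≠ [] ∧
    ∃ c : ℂ, ‖c‖ = 1 ∧ wordOp ρ.T v (wordOp ρ.S u x) = c • x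

end TwoGraphRep

/-!
The WOT-closure of a subalgebra is again a subalgebra, so the set of operators whose
adjoint lies in it is a subalgebra as well; hence if the adjoints of all generators lie in the
WOT-closed algebra they generate, so do the adjoints of the whole generated algebra, and then of
its WOT-closure, since taking adjoints is WOT-continuous. For `𝔖` the adjoints of the `S_i` lie
in the self-adjoint algebra generated by the `S_i` alone, and similarly for the `T_j`.
-/

section WotClosure

variable {E : Type*} [NormedAddCommGroup E] [InnerProductSpace ℂ E]

lemma subset_wotClosure (S : Set (E →L[ℂ] E)) : S ⊆ wotClosure S :=
  fun A hA _ hε _ => ⟨A, hA, fun _ _ => by simp [hε]⟩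

lemma wotClosure_mono {S S' : Set (E →L[ℂ] E)} (h : S ⊆ S') : wotClosure S ⊆ wotClosure S' :=
  fun _ hA ε hε F => (hA ε hε F).imp fun _ ⟨hB, hB'⟩ => ⟨h hB, hB'⟩

lemma norm_inner_sub_apply_le (A B C : E →L[ℂ] E) (x y : E) :
    ‖⟪x, (A - C) y⟫‖ ≤ ‖⟪x, (A - B) y⟫‖ + ‖⟪x, (B - C) y⟫‖ := by
  have h : (A - C) y = (A - B) y + (B - C) y := by simp
  rw [h, inner_add_right]
  exact norm_add_le _ _

lemma exists_approx_comp_of_mem_wotClosure {S : Set (E →L[ℂ] E)} {A : E →L[ℂ] E}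
    (hA : A ∈ wotClosure S) {ε : ℝ} (hε : 0 < ε) (F : Finset (E × E)) (g : E × E → E × E) :
    ∃ B ∈ S, ∀ p ∈ F, ‖⟪(g p).1, (A - B) (g p).2⟫‖ < ε :=
  (hA ε hε (F.image g)).imp fun _ ⟨hB, h⟩ =>
    ⟨hB, fun p hp => h (g p) (Finset.mem_image_of_mem g hp)⟩

lemma add_mem_wotClosure {S : Subalgebra ℂ (E →L[ℂ] E)} {A B : E →L[ℂ] E}
    (hA : A ∈ wotClosure (S : Set (E →L[ℂ] E))) (hB : B ∈ wotClosure (S : Set (E →L[ℂ] E))) :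
    A + B ∈ wotClosure (S : Set (E →L[ℂ] E)) := by
  intro ε hε F
  obtain ⟨A', hA', hAA'⟩ := hA (ε / 2) (by linarith) F
  obtain ⟨B', hB', hBB'⟩ := hB (ε / 2) (by linarith) F
  refine ⟨A' + B', add_mem hA' hB', fun p hp => ?_⟩
  have h : (A + B - (A' + B')) p.2 = (A - A') p.2 + (B - B') p.2 := by
    simp only [sub_apply, add_apply]; abel
  rw [h, inner_add_right]
  linarith [norm_add_le ⟪p.1, (A - A') p.2⟫ ⟪p.1, (B - B') p.2⟫, hAA' p hp, hBB' p hp]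

lemma mul_mem_wotClosure_of_mem {S : Subalgebra ℂ (E →L[ℂ] E)} {A B : E →L[ℂ] E}
    (hA : A ∈ wotClosure (S : Set (E →L[ℂ] E))) (hB : B ∈ S) :
    A * B ∈ wotClosure (S : Set (E →L[ℂ] E)) := by
  intro ε hε F
  obtain ⟨A', hA', hAA'⟩ := exists_approx_comp_of_mem_wotClosure hA hε F fun p => (p.1, B p.2)
  exact ⟨A' * B, mul_mem hA' hB, fun p hp => by simpa [sub_mul] using hAA' p hp⟩

variable [CompleteSpace E]

lemma mul_mem_wotClosure {S : Subalgebra ℂ (E →L[ℂ] E)} {A B : E →L[ℂ] E}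
    (hA : A ∈ wotClosure (S : Set (E →L[ℂ] E))) (hB : B ∈ wotClosure (S : Set (E →L[ℂ] E))) :
    A * B ∈ wotClosure (S : Set (E →L[ℂ] E)) := by
  intro ε hε F
  -- `⟪x, A (B - B') y⟫ = ⟪A† x, (B - B') y⟫`: approximate `B` against the vectors `A† x`.
  obtain ⟨B', hB', hBB'⟩ := exists_approx_comp_of_mem_wotClosure hB (half_pos hε) F
    fun p => (ContinuousLinearMap.adjoint A p.1, p.2)
  obtain ⟨C, hC, hC'⟩ := mul_mem_wotClosure_of_mem hA hB' (ε / 2) (half_pos hε) F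
  refine ⟨C, hC, fun p hp => ?_⟩
  have hAB' : ‖⟪p.1, (A * B - A * B') p.2⟫‖ < ε / 2 := by
    simpa [ContinuousLinearMap.adjoint_inner_left, ← mul_sub] using hBB' p hp
  linarith [norm_inner_sub_apply_le (A * B) (A * B') C p.1 p.2, hC' p hp]

lemma star_mem_wotClosure {S S' : Set (E →L[ℂ] E)} {A : E →L[ℂ] E}
    (hA : A ∈ wotClosure S) (hS : ∀ B ∈ S, star B ∈ wotClosure S') :
    star A ∈ wotClosure S' := by
  intro ε hε F
  obtain ⟨B, hB, hAB⟩ := exists_approx_comp_of_mem_wotClosure hA (half_pos hε) F Prod.swap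
  obtain ⟨C, hC, hBC⟩ := hS B hB (ε / 2) (half_pos hε) F
  refine ⟨C, hC, fun p hp => ?_⟩
  have hAB' : ‖⟪p.1, (star A - star B) p.2⟫‖ < ε / 2 := by
    have h : ⟪p.1, (star A - star B) p.2⟫ = ⟪(A - B) p.1, p.2⟫ := by
      simp only [sub_apply, inner_sub_right, inner_sub_left,
        ContinuousLinearMap.star_eq_adjoint, ContinuousLinearMap.adjoint_inner_right]
    rw [h, ← inner_conj_symm, RCLike.norm_conj]
    exact hAB p hp
  linarith [norm_inner_sub_apply_le (star A) (star B) C p.1 p.2, hBC p hp]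

def Subalgebra.wotClosure (S : Subalgebra ℂ (E →L[ℂ] E)) : Subalgebra ℂ (E →L[ℂ] E) where
  carrier := _root_.wotClosure (S : Set (E →L[ℂ] E))
  mul_mem' := mul_mem_wotClosure
  add_mem' := add_mem_wotClosure
  algebraMap_mem' r := subset_wotClosure _ (S.algebraMap_mem r)

end WotClosure

section GenWotAlg

variable {E : Type*} [NormedAddCommGroup E] [InnerProductSpace ℂ E]

lemma subset_genWotAlg (G : Set (E →L[ℂ] E)) : G ⊆ genWotAlg G :=
  (Algebra.subset_adjoin).trans (subset_wotClosure _)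

lemma genWotAlg_mono {G G' : Set (E →L[ℂ] E)} (h : G ⊆ G') : genWotAlg G ⊆ genWotAlg G' :=
  wotClosure_mono (Algebra.adjoin_mono h)

variable [CompleteSpace E]

lemma star_mem_genWotAlg_of_forall_star_mem {G : Set (E →L[ℂ] E)}
    (hG : ∀ g ∈ G, star g ∈ genWotAlg G) : ∀ A ∈ genWotAlg G, star A ∈ genWotAlg G := by
  have hadj : Algebra.adjoin ℂ G ≤ star (Subalgebra.wotClosure (Algebra.adjoin ℂ G)) :=
    Algebra.adjoin_le fun g hg => (Subalgebra.mem_star_iff _ g).2 (hG g hg)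
  exact fun A hA => star_mem_wotClosure hA fun B hB => (Subalgebra.mem_star_iff _ B).1 (hadj hB)

lemma star_mem_genWotAlg_union {G G' : Set (E →L[ℂ] E)}
    (hG : ∀ A ∈ genWotAlg G, star A ∈ genWotAlg G)
    (hG' : ∀ A ∈ genWotAlg G', star A ∈ genWotAlg G') :
    ∀ A ∈ genWotAlg (G ∪ G'), star A ∈ genWotAlg (G ∪ G') := by
  refine star_mem_genWotAlg_of_forall_star_mem ?_
  rintro g (hg | hg)
  · exact genWotAlg_mono Set.subset_union_left (hG g (subset_genWotAlg G hg))
  · exact genWotAlg_mono Set.subset_union_right (hG' g (subset_genWotAlg G' hg))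

end GenWotAlg

theorem statement12_general {m n : ℕ}
    {θ : Equiv.Perm (Fin m × Fin n)} {H : Type*}
    [NormedAddCommGroup H] [InnerProductSpace ℂ H] [CompleteSpace H]
    (ρ : TwoGraphRep m n θ H)
    (hS : ∀ A ∈ genWotAlg (Set.range ρ.S), star A ∈ genWotAlg (Set.range ρ.S))
    (hT : ∀ A ∈ genWotAlg (Set.range ρ.T), star A ∈ genWotAlg (Set.range ρ.T)) :
    ∀ A ∈ ρ.alg, star A ∈ ρ.alg :=
  star_mem_genWotAlg_union hS hT

/-- If both row-isometries `S` and `T` are singular, then `𝔖` is self-adjoint. -/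
theorem statement12 {m n : ℕ} (hm : 0 < m) (hn : 0 < n) (hmn : 2 ≤ m ∨ 2 ≤ n)
    {θ : Equiv.Perm (Fin m × Fin n)} {H : Type*}
    [NormedAddCommGroup H] [InnerProductSpace ℂ H] [CompleteSpace H]
    (ρ : TwoGraphRep m n θ H)
    (hS : ∀ A ∈ genWotAlg (Set.range ρ.S), star A ∈ genWotAlg (Set.range ρ.S))
    (hT : ∀ A ∈ genWotAlg (Set.range ρ.T), star A ∈ genWotAlg (Set.range ρ.T)) :
    ∀ A ∈ ρ.alg, star A ∈ ρ.alg :=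
  statement12_general ρ hS hT
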